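/- arXiv:2601.17590 — 2 statements merged into one kernel-verified Lean document; each statement's English description precedes it below -/
import Mathlib

section
/- Let f(V) = ((1-s_f)V)/(s_h V² - (s_h+s_f)V + 1) with 0 < s_f < s_h ≤ 1. Then f(V) < V for all V ∈ (0, s_f/s_h) and f(V) > V for all V ∈ (s_f/s_h, 1). -/
/-- Bistability of the Wolbachia growth function: f(V) < V below θ = s_f/s_h
and f(V) > V above θ. -/
theorem wolbachia_bistable (sf sh : ℝ) (hsf : 0 < sf) (hlt : sf < sh) (hsh : sh ≤ 1) :
    (∀ V ∈ Set.Ioo (0:ℝ) (sf / sh),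
        ((1 - sf) * V) / (sh * V ^ 2 - (sh + sf) * V + 1) < V) ∧
    (∀ V ∈ Set.Ioo (sf / sh) (1:ℝ),
        ((1 - sf) * V) / (sh * V ^ 2 - (sh + sf) * V + 1) > V) := by
  have hsh0 : 0 < sh := hsf.trans hlt
  constructor
  · rintro V ⟨h1, h2⟩
    have hVsh : sh * V < sf := by
      have := (lt_div_iff₀ hsh0).mp h2
      linarith
    have hV1 : V < 1 := by nlinarith
    have hD : 0 < sh * V ^ 2 - (sh + sf) * V + 1 := by nlinarith
    rw [div_lt_iff₀ hD]
    nlinarith [mul_pos (mul_pos h1 (by linarith : (0:ℝ) < sf - sh * V)) (by linarith : (0:ℝ) < 1 - V)]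
  · rintro V ⟨h1, h2⟩
    have hV0 : 0 < V := by
      have : 0 < sf / sh := div_pos hsf hsh0
      linarith
    have hVsh : sf < sh * V := by
      have := (div_lt_iff₀ hsh0).mp h1
      linarith
    have hD : 0 < sh * V ^ 2 - (sh + sf) * V + 1 := by nlinarith
    rw [gt_iff_lt, lt_div_iff₀ hD]
    nlinarith [mul_pos (mul_pos hV0 (by linarith : (0:ℝ) < sh * V - sf)) (by linarith : (0:ℝ) < 1 - V)]
end

section
/- Let U: ℝ → [0,1] be nonincreasing with lim_{z→-∞} U(z) = 1 and lim_{z→+∞} U(z) = U^R ∈ (0, θ), and let V: ℝ → [0,1] be nonincreasing with lim_{z→-∞} V(z) = V^L ∈ (θ, 1) and lim_{z→+∞} V(z) = 0, where 0 < θ < 1 and U^R < V^L. Then the set C = {c ∈ ℝ : U(z+c) ≥ V(z) for all z} is nonempty and bounded above. -/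
open Filter

/-- The set of admissible translations C = {c : U(·+c) ≥ V} is nonempty and
bounded above. -/
theorem translation_set_nonempty_bddAbove
    (U V : ℝ → ℝ) (θ UR VL : ℝ) (hθ : 0 < θ) (hθ1 : θ < 1)
    (hUrange : ∀ z, U z ∈ Set.Icc (0:ℝ) 1) (hUanti : Antitone U)
    (hUbot : Tendsto U atBot (nhds 1)) (hUtop : Tendsto U atTop (nhds UR))
    (hUR : UR ∈ Set.Ioo (0:ℝ) θ)
    (hVrange : ∀ z, V z ∈ Set.Icc (0:ℝ) 1) (hVanti : Antitone V)
    (hVbot : Tendsto V atBot (nhds VL)) (hVtop : Tendsto V atTop (nhds 0))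
    (hVL : VL ∈ Set.Ioo θ 1)
    (hURVL : UR < VL) :
    ({c : ℝ | ∀ z, V z ≤ U (z + c)}).Nonempty ∧
    BddAbove {c : ℝ | ∀ z, V z ≤ U (z + c)} := by
  -- U z ≥ UR for all z
  have hUge : ∀ z, UR ≤ U z := fun z => hUanti.le_of_tendsto hUtop z
  -- V z ≤ VL for all z
  have hVle : ∀ z, V z ≤ VL := fun z => ge_of_tendsto hVbot (eventually_atBot.2 ⟨z, fun y hy => hVanti hy⟩)
  constructor
  · -- nonempty
    obtain ⟨t, ht⟩ : ∃ t, ∀ z ≤ t, VL < U z := by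
      simpa using eventually_atBot.1 (hUbot.eventually (eventually_gt_nhds hVL.2))
    obtain ⟨s, hs⟩ : ∃ s, ∀ z ≥ s, V z < UR := by
      simpa using eventually_atTop.1 (hVtop.eventually (eventually_lt_nhds hUR.1))
    refine ⟨t - s, fun z => ?_⟩
    rcases le_or_gt s z with h | h
    · exact (hs z h).le.trans (hUge _)
    · have : z + (t - s) ≤ t := by linarith
      exact (hVle z).trans (ht _ this).le
  · -- bounded above
    obtain ⟨z0, hz0⟩ : ∃ z0, UR < V z0 := by
      have := eventually_atBot.1 (hVbot.eventually (eventually_gt_nhds hURVL))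
      obtain ⟨a, ha⟩ := this
      exact ⟨a, ha a le_rfl⟩
    obtain ⟨M, hM⟩ : ∃ M, ∀ y ≥ M, U y < V z0 := by
      simpa using eventually_atTop.1 (hUtop.eventually (eventually_lt_nhds hz0))
    refine ⟨M - z0, fun c hc => ?_⟩
    by_contra h
    push_neg at h
    have h1 : M ≤ z0 + c := by linarith
    exact absurd (hc z0) (not_le.2 (hM _ h1))
end
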